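/- Let g₁,…,g_m, h₁,…,h_n ∈ ℝ[u₁,…,u_k] and let D = {u ∈ ℝᵏ : gᵢ(u) ≥ 0 for all i, hⱼ(u) = 0 for all j}. Suppose there exist N ∈ ℝ, SOS polynomials s₀,…,s_m, and arbitrary polynomials q₁,…,q_n with N − (u₁² + ⋯ + u_k²) = s₀ + Σᵢ sᵢ gᵢ + Σⱼ qⱼ hⱼ. If f ∈ ℝ[u₁,…,u_k] satisfies f(u) > 0 for every u ∈ D, then there exist SOS polynomials s₀,…,s_m and arbitrary polynomials p₁,…,p_n such that f = s₀ + Σᵢ₌₁^m sᵢ gᵢ + Σⱼ₌₁^n pⱼ hⱼ. -/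

import Mathlib

/-!
The quadratic module `M` generated by the `gᵢ` and `±hⱼ` is archimedean, so its nonnegativity
set is compact and `f ≥ ε > 0` there. If `σ (f - ε/2) = 1 + q` with `σ` a sum of squares and
`q ∈ M`, then the least `λ` with `λ + f - ε/2 ∈ M` is `≤ 0`: otherwise the identity
`σ (f - ε/2) = 1 + q` lets one subtract a fixed fraction of `λ`. So `f ∈ M`. If there is no such
identity, `M + Σ² (ε/2 - f)` does not contain `-1`, and neither does a maximal quadratic module
`Q` containing it. Maximality makes `Q` contain `a` or `-a` for every `a`, and then
`a ↦ inf {r | r - a ∈ Q}` is a ring homomorphism to `ℝ` (Jacobi), i.e. evaluation at a point of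
the nonnegativity set where `f ≤ ε/2`, a contradiction.
-/

open MvPolynomial

/-- A real multivariate polynomial is a sum of squares. -/
def IsSOS {k : ℕ} (s : MvPolynomial (Fin k) ℝ) : Prop :=
  ∃ (r : ℕ) (p : Fin r → MvPolynomial (Fin k) ℝ), s = ∑ i, p i ^ 2

open scoped algebraMap

theorem isSOS_iff_isSumSq {k : ℕ} {s : MvPolynomial (Fin k) ℝ} : IsSOS s ↔ IsSumSq s := by
  constructor
  · rintro ⟨r, p, rfl⟩
    exact IsSumSq.sum_sq _ p
  · intro hs
    induction hs with
    | zero => exact ⟨0, ![], by simp⟩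
    | sq_add a _ ih =>
      obtain ⟨r, p, rfl⟩ := ih
      exact ⟨r + 1, Fin.cons a p, by simp [Fin.sum_univ_succ, sq]⟩

structure IsQuadraticModule {R : Type*} [CommRing R] (M : Set R) : Prop where
  one_mem : (1 : R) ∈ M
  add_mem {a b : R} : a ∈ M → b ∈ M → a + b ∈ M
  mul_self_mul_mem (x : R) {a : R} : a ∈ M → x * x * a ∈ M

def addSumSqMul {R : Type*} [CommRing R] (M : Set R) (b : R) : Set R :=
  {x | ∃ q ∈ M, ∃ σ, IsSumSq σ ∧ x = q + σ * b}

theorem subset_addSumSqMul {R : Type*} [CommRing R] {M : Set R} (b : R) :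
    M ⊆ addSumSqMul M b :=
  fun x hx => ⟨x, hx, 0, .zero, by ring⟩

def IsArchimedean {A : Type*} [CommRing A] [Algebra ℝ A] (M : Set A) : Prop :=
  ∀ a : A, ∃ r : ℝ, (r : A) - a ∈ M

theorem IsArchimedean.mono {A : Type*} [CommRing A] [Algebra ℝ A] {M N : Set A}
    (hM : IsArchimedean M) (hMN : M ⊆ N) : IsArchimedean N :=
  fun a => (hM a).imp fun _ h => hMN h

noncomputable def leastBound {A : Type*} [CommRing A] [Algebra ℝ A] (M : Set A) (a : A) : ℝ :=
  sInf {r : ℝ | (r : A) - a ∈ M}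

namespace IsQuadraticModule

section CommRing

variable {R : Type*} [CommRing R] {M : Set R}

theorem zero_mem (hM : IsQuadraticModule M) : (0 : R) ∈ M := by
  simpa using hM.mul_self_mul_mem 0 hM.one_mem

theorem mul_self_mem (hM : IsQuadraticModule M) (x : R) : x * x ∈ M := by
  simpa using hM.mul_self_mul_mem x hM.one_mem

theorem isSumSq_mul_mem (hM : IsQuadraticModule M) {σ a : R} (hσ : IsSumSq σ) (ha : a ∈ M) :
    σ * a ∈ M := by
  induction hσ with
  | zero => simpa using hM.zero_mem
  | sq_add x _ ih =>
    rw [add_mul]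
    exact hM.add_mem (hM.mul_self_mul_mem x ha) ih

theorem isSumSq_mem (hM : IsQuadraticModule M) {σ : R} (hσ : IsSumSq σ) : σ ∈ M := by
  simpa using hM.isSumSq_mul_mem hσ hM.one_mem

protected theorem addSumSqMul (hM : IsQuadraticModule M) (b : R) :
    IsQuadraticModule (addSumSqMul M b) where
  one_mem := ⟨1, hM.one_mem, 0, .zero, by ring⟩
  add_mem := by
    rintro _ _ ⟨q, hq, σ, hσ, rfl⟩ ⟨q', hq', σ', hσ', rfl⟩
    exact ⟨q + q', hM.add_mem hq hq', σ + σ', hσ.add hσ', by ring⟩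
  mul_self_mul_mem x := by
    rintro _ ⟨q, hq, σ, hσ, rfl⟩
    exact ⟨x * x * q, hM.mul_self_mul_mem x hq, x * x * σ, (IsSumSq.mul_self x).mul hσ, by ring⟩

theorem mem_addSumSqMul_self (hM : IsQuadraticModule M) (b : R) : b ∈ addSumSqMul M b :=
  ⟨0, hM.zero_mem, 1, .one, by ring⟩

theorem exists_maximal (hM : IsQuadraticModule M) (hM₁ : (-1 : R) ∉ M) :
    ∃ Q, M ⊆ Q ∧ Maximal (fun Q : Set R => IsQuadraticModule Q ∧ (-1 : R) ∉ Q) Q := by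
  refine zorn_subset_nonempty _ (fun c hc hchain ⟨Q₀, hQ₀⟩ => ?_) M ⟨hM, hM₁⟩
  refine ⟨⋃₀ c, ⟨⟨⟨Q₀, hQ₀, (hc hQ₀).1.one_mem⟩, ?_, ?_⟩, ?_⟩, fun _ => Set.subset_sUnion_of_mem⟩
  · rintro a b ⟨Qa, hQa, ha⟩ ⟨Qb, hQb, hb⟩
    rcases hchain.total hQa hQb with hab | hba
    · exact ⟨Qb, hQb, (hc hQb).1.add_mem (hab ha) hb⟩
    · exact ⟨Qa, hQa, (hc hQa).1.add_mem ha (hba hb)⟩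
  · rintro x a ⟨Qa, hQa, ha⟩
    exact ⟨Qa, hQa, (hc hQa).1.mul_self_mul_mem x ha⟩
  · rintro ⟨Qa, hQa, ha⟩
    exact (hc hQa).2 ha

end CommRing

section Algebra

variable {A : Type*} [CommRing A] [Algebra ℝ A] {M : Set A}

theorem coe_mul_mem (hM : IsQuadraticModule M) {c : ℝ} (hc : 0 ≤ c) {a : A} (ha : a ∈ M) :
    (c : A) * a ∈ M := by
  have hsq : (c : A) = (√c : A) * (√c : A) := by
    rw [← algebraMap.coe_mul, Real.mul_self_sqrt hc]
  rw [hsq]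
  exact hM.mul_self_mul_mem _ ha

theorem coe_mem (hM : IsQuadraticModule M) {c : ℝ} (hc : 0 ≤ c) : (c : A) ∈ M := by
  simpa using hM.coe_mul_mem hc hM.one_mem

theorem mem_of_coe_mul_mem (hM : IsQuadraticModule M) {c : ℝ} (hc : 0 < c) {a : A}
    (h : (c : A) * a ∈ M) : a ∈ M := by
  simpa [← mul_assoc, ← algebraMap.coe_mul, hc.ne'] using hM.coe_mul_mem (inv_nonneg.2 hc.le) h

theorem coe_sub_mem_of_le (hM : IsQuadraticModule M) {a : A} {c d : ℝ} (h : (c : A) - a ∈ M)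
    (hcd : c ≤ d) : (d : A) - a ∈ M := by
  have : (d : A) - a = ((d - c : ℝ) : A) + ((c : A) - a) := by push_cast; ring
  rw [this]
  exact hM.add_mem (hM.coe_mem (sub_nonneg.2 hcd)) h

theorem mem_of_neg_one_mem (hM : IsQuadraticModule M) (hM₁ : (-1 : A) ∈ M) (a : A) : a ∈ M := by
  refine hM.mem_of_coe_mul_mem (c := 4) (by norm_num) ?_
  have : ((4 : ℝ) : A) * a = (a + 1) * (a + 1) * 1 + (a - 1) * (a - 1) * (-1) := by
    push_cast [map_ofNat]; ring
  rw [this]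
  exact hM.add_mem (hM.mul_self_mul_mem _ hM.one_mem) (hM.mul_self_mul_mem _ hM₁)

theorem coe_mem_iff (hM : IsQuadraticModule M) (hM₁ : (-1 : A) ∉ M) {c : ℝ} :
    (c : A) ∈ M ↔ 0 ≤ c := by
  refine ⟨fun h => ?_, hM.coe_mem⟩
  by_contra! hc
  have := hM.coe_mul_mem (neg_nonneg.2 (inv_nonpos.2 hc.le)) h
  rw [← algebraMap.coe_mul, neg_mul, inv_mul_cancel₀ hc.ne, algebraMap.coe_neg,
    algebraMap.coe_one] at this
  exact hM₁ this

theorem mem_or_neg_mem_of_maximal {Q : Set A}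
    (hQ : Maximal (fun Q : Set A => IsQuadraticModule Q ∧ (-1 : A) ∉ Q) Q) (a : A) :
    a ∈ Q ∨ -a ∈ Q := by
  obtain ⟨⟨hQ, hQ₁⟩, hmax⟩ := hQ
  have neg_one_eq : ∀ b ∉ Q, ∃ q ∈ Q, ∃ σ, IsSumSq σ ∧ -1 = q + σ * b := fun b hb => by
    by_contra hne
    exact hb (hmax ⟨hQ.addSumSqMul b, hne⟩ (subset_addSumSqMul b) (hQ.mem_addSumSqMul_self b))
  by_contra! ha
  obtain ⟨q₁, hq₁, σ₁, hσ₁, e₁⟩ := neg_one_eq a ha.1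
  obtain ⟨q₂, hq₂, σ₂, hσ₂, e₂⟩ := neg_one_eq (-a) ha.2
  have hneg : -σ₁ ∈ Q := by
    have : -σ₁ = σ₂ * q₁ + σ₁ * q₂ + σ₂ := by linear_combination σ₂ * e₁ + σ₁ * e₂
    rw [this]
    exact hQ.add_mem (hQ.add_mem (hQ.isSumSq_mul_mem hσ₂ hq₁) (hQ.isSumSq_mul_mem hσ₁ hq₂))
      (hQ.isSumSq_mem hσ₂)
  have : ((-4 : ℝ) : A) = (4 : ℝ) * q₁ + (a + 1) * (a + 1) * σ₁ + (a - 1) * (a - 1) * (-σ₁) := by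
    push_cast [map_ofNat]; linear_combination 4 * e₁
  have h4 : ((-4 : ℝ) : A) ∈ Q := by
    rw [this]
    exact hQ.add_mem (hQ.add_mem (hQ.coe_mul_mem (by norm_num) hq₁)
      (hQ.mul_self_mul_mem _ (hQ.isSumSq_mem hσ₁))) (hQ.mul_self_mul_mem _ hneg)
  exact absurd ((hQ.coe_mem_iff hQ₁).1 h4) (by norm_num)

end Algebra

section Archimedean

variable {A : Type*} [CommRing A] [Algebra ℝ A] {M : Set A}

-- `a` is bounded iff `a * a` is; the squared form keeps the closure identities free of division.
def boundedSubalgebra (hM : IsQuadraticModule M) : Subalgebra ℝ A where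
  carrier := {a | ∃ r : ℝ, (r : A) - a * a ∈ M}
  mul_mem' := by
    rintro a b ⟨r, hr⟩ ⟨s, hs⟩
    have hs' : ((max s 0 : ℝ) : A) - b * b ∈ M := hM.coe_sub_mem_of_le hs (le_max_left _ _)
    refine ⟨r * max s 0, ?_⟩
    have : ((r * max s 0 : ℝ) : A) - a * b * (a * b) =
        a * a * (((max s 0 : ℝ) : A) - b * b) + ((max s 0 : ℝ) : A) * ((r : A) - a * a) := by
      push_cast; ring
    rw [this]
    exact hM.add_mem (hM.mul_self_mul_mem a hs') (hM.coe_mul_mem (le_max_right _ _) hr)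
  add_mem' := by
    rintro a b ⟨r, hr⟩ ⟨s, hs⟩
    refine ⟨2 * r + 2 * s, ?_⟩
    have : ((2 * r + 2 * s : ℝ) : A) - (a + b) * (a + b) =
        ((2 : ℝ) : A) * ((r : A) - a * a) + ((2 : ℝ) : A) * ((s : A) - b * b) +
          (a - b) * (a - b) := by
      push_cast [map_ofNat]; ring
    rw [this]
    exact hM.add_mem (hM.add_mem (hM.coe_mul_mem zero_le_two hr) (hM.coe_mul_mem zero_le_two hs))
      (hM.mul_self_mem _)
  algebraMap_mem' c := ⟨c * c, by rw [algebraMap.coe_mul, sub_self]; exact hM.zero_mem⟩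

theorem isArchimedean_of_boundedSubalgebra_eq_top (hM : IsQuadraticModule M)
    (h : hM.boundedSubalgebra = ⊤) : IsArchimedean M := by
  intro a
  obtain ⟨r, hr⟩ : a ∈ hM.boundedSubalgebra := h ▸ Algebra.mem_top
  refine ⟨(r + 1) / 2, hM.mem_of_coe_mul_mem two_pos ?_⟩
  have : ((2 : ℝ) : A) * ((((r + 1) / 2 : ℝ) : A) - a) = ((r : A) - a * a) + (a - 1) * (a - 1) := by
    rw [mul_sub, ← algebraMap.coe_mul, mul_div_cancel₀ _ two_ne_zero]
    push_cast [map_ofNat]; ring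
  rw [this]
  exact hM.add_mem hr (hM.mul_self_mem _)

end Archimedean

section LeastBound

variable {A : Type*} [CommRing A] [Algebra ℝ A] {M : Set A}

theorem sub_mem_of_leastBound_lt (hM : IsQuadraticModule M) (harch : IsArchimedean M) {a : A}
    {r : ℝ} (h : leastBound M a < r) : (r : A) - a ∈ M := by
  obtain ⟨s, hs, hsr⟩ := exists_lt_of_csInf_lt (harch a) h
  exact hM.coe_sub_mem_of_le hs hsr.le

theorem coe_sub_two_mul_add_mem (hM : IsQuadraticModule M) {σ q a : A} (hσ : IsSumSq σ)
    (hq : q ∈ M) (hrel : σ * a = 1 + q) {k l t : ℝ} (hσk : (k : A) - σ ∈ M) (hqk : (k : A) - q ∈ M)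
    (hl : 0 ≤ l) (ht : 0 ≤ t) (htl : t * (1 + k + l * k) ≤ 2 * l) (h : (l : A) + a ∈ M) :
    ((l - 2 * t : ℝ) : A) + a ∈ M := by
  have : ((l - 2 * t : ℝ) : A) + a =
      (1 - (t : A) * σ) * (1 - (t : A) * σ) * ((l : A) + a) + ((2 * t : ℝ) : A) * q +
        ((t ^ 2 : ℝ) : A) * (σ * ((k : A) - q)) + ((l * t ^ 2 : ℝ) : A) * (σ * ((k : A) - σ)) +
        ((t * (2 * l - t * (1 + k + l * k)) : ℝ) : A) * σ := by
    push_cast [map_ofNat]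
    linear_combination (2 * (t : A) - (t : A) ^ 2 * σ) * hrel
  rw [this]
  refine hM.add_mem (hM.add_mem (hM.add_mem (hM.add_mem ?_ ?_) ?_) ?_) ?_
  · exact hM.mul_self_mul_mem _ h
  · exact hM.coe_mul_mem (by positivity) hq
  · exact hM.coe_mul_mem (by positivity) (hM.isSumSq_mul_mem hσ hqk)
  · exact hM.coe_mul_mem (by positivity) (hM.isSumSq_mul_mem hσ hσk)
  · exact hM.coe_mul_mem (mul_nonneg ht (by linarith)) (hM.isSumSq_mem hσ)

theorem coe_sub_two_mul_mul_mem (hM : IsQuadraticModule M) {p b : A} {K δ : ℝ}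
    (hK : (K : A) - b * b ∈ M) (hδ : 0 ≤ δ) (h₁ : (δ : A) - p ∈ M) (h₂ : (δ : A) + p ∈ M) :
    ((δ * (K + 1) : ℝ) : A) - 2 * (p * b) ∈ M := by
  refine hM.mem_of_coe_mul_mem two_pos ?_
  have : ((2 : ℝ) : A) * (((δ * (K + 1) : ℝ) : A) - 2 * (p * b)) =
      (b - 1) * (b - 1) * ((δ : A) + p) + (b + 1) * (b + 1) * ((δ : A) - p) +
        ((2 * δ : ℝ) : A) * ((K : A) - b * b) := by
    push_cast [map_ofNat]; ring
  rw [this]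
  exact hM.add_mem (hM.add_mem (hM.mul_self_mul_mem _ h₂) (hM.mul_self_mul_mem _ h₁))
    (hM.coe_mul_mem (by positivity) hK)

variable (hM : IsQuadraticModule M) (hM₁ : (-1 : A) ∉ M) (harch : IsArchimedean M)
include hM hM₁ harch

theorem bddBelow_setOf_coe_sub_mem (a : A) : BddBelow {r : ℝ | (r : A) - a ∈ M} := by
  obtain ⟨s, hs⟩ := harch (-a)
  refine ⟨-s, fun r hr => ?_⟩
  have : ((r + s : ℝ) : A) ∈ M := by
    convert hM.add_mem hr hs using 1
    push_cast; ring
  linarith [(hM.coe_mem_iff hM₁).1 this]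

theorem leastBound_le {a : A} {r : ℝ} (h : (r : A) - a ∈ M) : leastBound M a ≤ r :=
  csInf_le (hM.bddBelow_setOf_coe_sub_mem hM₁ harch a) h

theorem leastBound_le_zero {a : A} (h : ∀ ε : ℝ, 0 < ε → (ε : A) - a ∈ M) : leastBound M a ≤ 0 :=
  le_of_forall_pos_le_add fun ε hε => by simpa using hM.leastBound_le hM₁ harch (h ε hε)

theorem leastBound_coe (c : ℝ) : leastBound M (c : A) = c := by
  refine le_antisymm (hM.leastBound_le hM₁ harch (by rw [sub_self]; exact hM.zero_mem)) ?_
  refine le_csInf (harch _) fun r hr => ?_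
  rw [Set.mem_ofPred_eq, ← algebraMap.coe_sub, hM.coe_mem_iff hM₁] at hr
  linarith

theorem leastBound_nonneg {a : A} (ha : a ∈ M) : 0 ≤ leastBound M a := by
  refine le_csInf (harch a) fun r hr => ?_
  simpa using (hM.coe_mem_iff hM₁).1 (by simpa using hM.add_mem hr ha)

theorem leastBound_add_le (a b : A) : leastBound M (a + b) ≤ leastBound M a + leastBound M b := by
  refine le_of_forall_pos_le_add fun ε hε => hM.leastBound_le hM₁ harch ?_
  have : ((leastBound M a + leastBound M b + ε : ℝ) : A) - (a + b) =
      (((leastBound M a + ε / 2 : ℝ) : A) - a) + (((leastBound M b + ε / 2 : ℝ) : A) - b) := by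
    have hε₂ : (ε : A) = ((ε / 2 : ℝ) : A) + ((ε / 2 : ℝ) : A) := by
      rw [← algebraMap.coe_add, add_halves]
    push_cast
    linear_combination hε₂
  rw [this]
  exact hM.add_mem (hM.sub_mem_of_leastBound_lt harch (by linarith))
    (hM.sub_mem_of_leastBound_lt harch (by linarith))

theorem leastBound_neg_nonpos_of_isSumSq_mul_eq {σ q a : A} (hσ : IsSumSq σ) (hq : q ∈ M)
    (hrel : σ * a = 1 + q) : leastBound M (-a) ≤ 0 := by
  set l₀ := leastBound M (-a)
  by_contra! hl₀
  obtain ⟨k₁, hk₁⟩ := harch σ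
  obtain ⟨k₂, hk₂⟩ := harch q
  set k := max (max k₁ k₂) 0
  have hk : 0 ≤ k := le_max_right _ _
  have hσk : (k : A) - σ ∈ M :=
    hM.coe_sub_mem_of_le hk₁ ((le_max_left _ _).trans (le_max_left _ _))
  have hqk : (k : A) - q ∈ M :=
    hM.coe_sub_mem_of_le hk₂ ((le_max_right _ _).trans (le_max_left _ _))
  have hden : 0 < 1 + k + 2 * l₀ * k := by positivity
  set t := l₀ / (1 + k + 2 * l₀ * k)
  have ht : 0 < t := by positivity
  have htl : t ≤ l₀ := div_le_self hl₀.le (by nlinarith)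
  have hmem : ((l₀ + t : ℝ) : A) + a ∈ M := by
    simpa using hM.sub_mem_of_leastBound_lt harch (show l₀ < l₀ + t by linarith)
  have hstep := hM.coe_sub_two_mul_add_mem hσ hq hrel hσk hqk (by positivity) ht.le ?_ hmem
  · have := hM.leastBound_le hM₁ harch (a := -a) (r := l₀ + t - 2 * t) (by simpa using hstep)
    linarith
  · calc t * (1 + k + (l₀ + t) * k) ≤ t * (1 + k + 2 * l₀ * k) := by gcongr; linarith
      _ = l₀ := div_mul_cancel₀ _ hden.ne'
      _ ≤ 2 * (l₀ + t) := by linarith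

end LeastBound

section Character

variable {A : Type*} [CommRing A] [Algebra ℝ A] {M : Set A} (hM : IsQuadraticModule M)
  (hM₁ : (-1 : A) ∉ M) (harch : IsArchimedean M) (hsemi : ∀ a : A, a ∈ M ∨ -a ∈ M)
include hM hM₁ harch hsemi

theorem leastBound_neg (a : A) : leastBound M (-a) = -leastBound M a := by
  refine le_antisymm ?_ ?_
  · rw [le_neg]
    refine le_of_forall_lt_imp_le_of_dense fun s hs => ?_
    have hnot : (s : A) - a ∉ M := fun h => (hM.leastBound_le hM₁ harch h).not_gt hs
    have hmem : ((-s : ℝ) : A) - -a ∈ M := by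
      convert (hsemi _).resolve_left hnot using 1
      push_cast; ring
    linarith [hM.leastBound_le hM₁ harch hmem]
  · have := hM.leastBound_add_le hM₁ harch a (-a)
    rw [add_neg_cancel, ← algebraMap.coe_zero (R := ℝ), hM.leastBound_coe hM₁ harch] at this
    linarith

theorem leastBound_add (a b : A) : leastBound M (a + b) = leastBound M a + leastBound M b := by
  refine le_antisymm (hM.leastBound_add_le hM₁ harch a b) ?_
  have := hM.leastBound_add_le hM₁ harch (a + b) (-b)
  rw [add_neg_cancel_right, hM.leastBound_neg hM₁ harch hsemi] at this
  linarith

theorem leastBound_sub_coe (a : A) (c : ℝ) : leastBound M (a - c) = leastBound M a - c := by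
  rw [sub_eq_add_neg, ← algebraMap.coe_neg, hM.leastBound_add hM₁ harch hsemi,
    hM.leastBound_coe hM₁ harch, sub_eq_add_neg]

theorem leastBound_mul_eq_zero {p : A} (hp : leastBound M p = 0) (b : A) :
    leastBound M (p * b) = 0 := by
  have hδ : ∀ δ : ℝ, 0 < δ → (δ : A) - p ∈ M ∧ (δ : A) + p ∈ M := fun δ hδ =>
    ⟨hM.sub_mem_of_leastBound_lt harch (by linarith), by
      simpa using hM.sub_mem_of_leastBound_lt harch (a := -p)
        (by rw [hM.leastBound_neg hM₁ harch hsemi, hp]; linarith)⟩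
  have hle : ∀ c : A, leastBound M (2 * (p * c)) ≤ 0 := fun c => by
    obtain ⟨K₀, hK₀⟩ := harch (c * c)
    have hK : ((max K₀ 0 : ℝ) : A) - c * c ∈ M := hM.coe_sub_mem_of_le hK₀ (le_max_left _ _)
    have hK₁ : 0 < max K₀ 0 + 1 := by positivity
    refine hM.leastBound_le_zero hM₁ harch fun ε hε => ?_
    obtain ⟨h₁, h₂⟩ := hδ (ε / (max K₀ 0 + 1)) (by positivity)
    simpa [div_mul_cancel₀ _ hK₁.ne'] using hM.coe_sub_two_mul_mul_mem hK (by positivity) h₁ h₂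
  have htwo : leastBound M (2 * (p * b)) = 2 * leastBound M (p * b) := by
    rw [two_mul, hM.leastBound_add hM₁ harch hsemi, two_mul]
  have hneg : leastBound M (2 * (p * -b)) = -leastBound M (2 * (p * b)) := by
    rw [mul_neg, mul_neg, hM.leastBound_neg hM₁ harch hsemi]
  linarith [hle b, hle (-b)]

theorem leastBound_mul (a b : A) : leastBound M (a * b) = leastBound M a * leastBound M b := by
  set α := leastBound M a
  set β := leastBound M b
  have ha : leastBound M (a - α) = 0 := by rw [hM.leastBound_sub_coe hM₁ harch hsemi, sub_self]
  have hb : leastBound M (b - β) = 0 := by rw [hM.leastBound_sub_coe hM₁ harch hsemi, sub_self]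
  have : a * b = (a - α) * b + (b - β) * α + ((α * β : ℝ) : A) := by push_cast; ring
  rw [this, hM.leastBound_add hM₁ harch hsemi, hM.leastBound_add hM₁ harch hsemi,
    hM.leastBound_mul_eq_zero hM₁ harch hsemi ha, hM.leastBound_mul_eq_zero hM₁ harch hsemi hb,
    hM.leastBound_coe hM₁ harch, zero_add, zero_add]

theorem exists_algHom_nonneg : ∃ φ : A →ₐ[ℝ] ℝ, ∀ a ∈ M, 0 ≤ φ a :=
  ⟨{ toFun := leastBound M
     map_one' := by simpa using hM.leastBound_coe hM₁ harch 1
     map_mul' := hM.leastBound_mul hM₁ harch hsemi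
     map_zero' := by simpa using hM.leastBound_coe hM₁ harch 0
     map_add' := hM.leastBound_add hM₁ harch hsemi
     commutes' := hM.leastBound_coe hM₁ harch },
    fun _ => hM.leastBound_nonneg hM₁ harch⟩

end Character

theorem mem_of_forall_algHom_nonneg_imp_le {A : Type*} [CommRing A] [Algebra ℝ A] {M : Set A}
    (hM : IsQuadraticModule M) (harch : IsArchimedean M) {a : A} {ε : ℝ} (hε : 0 < ε)
    (ha : ∀ φ : A →ₐ[ℝ] ℝ, (∀ b ∈ M, 0 ≤ φ b) → ε ≤ φ a) : a ∈ M := by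
  by_cases hM₁ : (-1 : A) ∈ M
  · exact hM.mem_of_neg_one_mem hM₁ a
  by_cases hrep : ∃ σ q, IsSumSq σ ∧ q ∈ M ∧ σ * (a - ((ε / 2 : ℝ) : A)) = 1 + q
  · obtain ⟨σ, q, hσ, hq, hrel⟩ := hrep
    have := hM.leastBound_neg_nonpos_of_isSumSq_mul_eq hM₁ harch hσ hq hrel
    simpa using hM.sub_mem_of_leastBound_lt harch (this.trans_lt (half_pos hε))
  · have hM'₁ : (-1 : A) ∉ addSumSqMul M (((ε / 2 : ℝ) : A) - a) := by
      rintro ⟨q, hq, σ, hσ, h⟩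
      exact hrep ⟨σ, q, hσ, hq, by linear_combination h⟩
    obtain ⟨Q, hMQ, hQ⟩ := (hM.addSumSqMul _).exists_maximal hM'₁
    obtain ⟨φ, hφ⟩ := hQ.1.1.exists_algHom_nonneg hQ.1.2
      (harch.mono ((subset_addSumSqMul _).trans hMQ)) (mem_or_neg_mem_of_maximal hQ)
    have hle := ha φ fun b hb => hφ b (hMQ (subset_addSumSqMul _ hb))
    have hge := hφ _ (hMQ (hM.mem_addSumSqMul_self _))
    rw [map_sub, AlgHom.commutes, Algebra.algebraMap_self, RingHom.id_apply] at hge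
    linarith

end IsQuadraticModule

section MvPolynomial

variable {σ : Type*}

theorem IsQuadraticModule.isArchimedean_of_sub_sum_sq_mem [Fintype σ]
    {M : Set (MvPolynomial σ ℝ)} (hM : IsQuadraticModule M) {N : ℝ}
    (hN : C N - ∑ i, X i ^ 2 ∈ M) : IsArchimedean M := by
  classical
  refine hM.isArchimedean_of_boundedSubalgebra_eq_top (eq_top_iff.2 ?_)
  rw [← adjoin_range_X, Algebra.adjoin_le_iff]
  rintro _ ⟨i, rfl⟩
  refine ⟨N, ?_⟩
  have : (N : MvPolynomial σ ℝ) - X i * X i =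
      (C N - ∑ j, X j ^ 2) + ∑ j ∈ Finset.univ.erase i, X j ^ 2 := by
    rw [← Finset.add_sum_erase _ _ (Finset.mem_univ i), ← algebraMap_eq]
    ring
  rw [this]
  exact hM.add_mem hN (hM.isSumSq_mem (IsSumSq.sum_sq _ _))

def nonnegLocus (M : Set (MvPolynomial σ ℝ)) : Set (σ → ℝ) :=
  {u | ∀ p ∈ M, 0 ≤ eval u p}

theorem isCompact_nonnegLocus {M : Set (MvPolynomial σ ℝ)} (harch : IsArchimedean M) :
    IsCompact (nonnegLocus M) := by
  choose r hr using fun i => harch (X i)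
  choose s hs using fun i => harch (-X i)
  refine (isCompact_univ_pi fun i => isCompact_Icc (a := -s i) (b := r i)).of_isClosed_subset
    ?_ fun u hu i _ => ?_
  · have : nonnegLocus M = ⋂ p ∈ M, {u | 0 ≤ eval u p} := by ext; simp [nonnegLocus]
    rw [this]
    exact isClosed_biInter fun p _ => isClosed_le continuous_const (continuous_eval p)
  · have h₁ := hu _ (hr i)
    have h₂ := hu _ (hs i)
    simp only [MvPolynomial.algebraMap_apply, Algebra.algebraMap_self, Real.ringHom_apply, map_sub,
      map_add, eval_C, eval_X, sub_nonneg, sub_neg_eq_add] at h₁ h₂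
    exact ⟨by linarith, h₁⟩

theorem IsQuadraticModule.mem_of_forall_nonnegLocus_pos {M : Set (MvPolynomial σ ℝ)}
    (hM : IsQuadraticModule M) (harch : IsArchimedean M) {f : MvPolynomial σ ℝ}
    (hf : ∀ u ∈ nonnegLocus M, 0 < eval u f) : f ∈ M := by
  obtain ⟨ε, hε, hεf⟩ :=
    (isCompact_nonnegLocus harch).exists_forall_le' (continuous_eval f).continuousOn hf
  refine hM.mem_of_forall_algHom_nonneg_imp_le harch hε fun φ hφ => ?_
  have hφ_eval : ∀ p, φ p = eval (φ ∘ X) p := fun p => by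
    rw [← coe_aeval_eq_eval, ← aeval_unique]; rfl
  rw [hφ_eval]
  exact hεf _ fun p hp => hφ_eval p ▸ hφ p hp

end MvPolynomial

section GeneratedQuadraticModule

variable {R : Type*} [CommRing R] {ι κ : Type*} [Fintype ι] [Fintype κ]

def quadraticModule (g : ι → R) (h : κ → R) : Set R :=
  {p | ∃ (s₀ : R) (s : ι → R) (q : κ → R), IsSumSq s₀ ∧ (∀ i, IsSumSq (s i)) ∧
    p = s₀ + ∑ i, s i * g i + ∑ j, q j * h j}

variable (g : ι → R) (h : κ → R)

theorem isQuadraticModule_quadraticModule : IsQuadraticModule (quadraticModule g h) where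
  one_mem := ⟨1, 0, 0, .one, fun _ => .zero, by simp⟩
  add_mem := by
    rintro _ _ ⟨s₀, s, q, hs₀, hs, rfl⟩ ⟨t₀, t, r, ht₀, ht, rfl⟩
    refine ⟨s₀ + t₀, s + t, q + r, hs₀.add ht₀, fun i => (hs i).add (ht i), ?_⟩
    simp only [Pi.add_apply, add_mul, Finset.sum_add_distrib]
    ring
  mul_self_mul_mem x := by
    rintro _ ⟨s₀, s, q, hs₀, hs, rfl⟩
    refine ⟨x * x * s₀, fun i => x * x * s i, fun j => x * x * q j,
      (IsSumSq.mul_self x).mul hs₀, fun i => (IsSumSq.mul_self x).mul (hs i), ?_⟩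
    simp only [mul_add, Finset.mul_sum, mul_assoc]

theorem ineq_mem_quadraticModule (i : ι) : g i ∈ quadraticModule g h := by
  classical
  exact ⟨0, Pi.single i 1, 0, .zero, fun i' => by by_cases hi : i' = i <;> simp [hi],
    by simp [Pi.single_apply]⟩

theorem eq_mem_quadraticModule (j : κ) : h j ∈ quadraticModule g h := by
  classical
  exact ⟨0, 0, Pi.single j 1, .zero, fun _ => .zero, by simp [Pi.single_apply]⟩

theorem neg_eq_mem_quadraticModule (j : κ) : -h j ∈ quadraticModule g h := by
  classical
  exact ⟨0, 0, Pi.single j (-1), .zero, fun _ => .zero, by simp [Pi.single_apply]⟩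

end GeneratedQuadraticModule

/-- Putinar's Positivstellensatz extended to domains with equality constraints. -/
theorem putinar_with_equalities {k m n : ℕ}
    (g : Fin m → MvPolynomial (Fin k) ℝ) (h : Fin n → MvPolynomial (Fin k) ℝ)
    (harch : ∃ (N : ℝ) (s₀ : MvPolynomial (Fin k) ℝ)
        (s : Fin m → MvPolynomial (Fin k) ℝ) (q : Fin n → MvPolynomial (Fin k) ℝ),
      IsSOS s₀ ∧ (∀ i, IsSOS (s i)) ∧
      C N - ∑ j : Fin k, X j ^ 2 = s₀ + ∑ i, s i * g i + ∑ j, q j * h j)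
    (f : MvPolynomial (Fin k) ℝ)
    (hf : ∀ u : Fin k → ℝ, (∀ i, 0 ≤ eval u (g i)) → (∀ j, eval u (h j) = 0) →
      0 < eval u f) :
    ∃ (s₀ : MvPolynomial (Fin k) ℝ) (s : Fin m → MvPolynomial (Fin k) ℝ)
      (p : Fin n → MvPolynomial (Fin k) ℝ),
      IsSOS s₀ ∧ (∀ i, IsSOS (s i)) ∧
      f = s₀ + ∑ i, s i * g i + ∑ j, p j * h j := by
  obtain ⟨N, s₀, s, q, hs₀, hs, hN⟩ := harch
  have hM := isQuadraticModule_quadraticModule g h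
  have hMarch : IsArchimedean (quadraticModule g h) := hM.isArchimedean_of_sub_sum_sq_mem
    ⟨s₀, s, q, isSOS_iff_isSumSq.1 hs₀, fun i => isSOS_iff_isSumSq.1 (hs i), hN⟩
  have hfpos : ∀ u ∈ nonnegLocus (quadraticModule g h), 0 < eval u f := fun u hu =>
    hf u (fun i => hu _ (ineq_mem_quadraticModule g h i)) fun j =>
      le_antisymm (by simpa using hu _ (neg_eq_mem_quadraticModule g h j))
        (hu _ (eq_mem_quadraticModule g h j))
  obtain ⟨t₀, t, p, ht₀, ht, hf_eq⟩ := hM.mem_of_forall_nonnegLocus_pos hMarch hfpos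
  exact ⟨t₀, t, p, isSOS_iff_isSumSq.2 ht₀, fun i => isSOS_iff_isSumSq.2 (ht i), hf_eq⟩
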